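/- arXiv:2112.12225 — 3 statements merged into one kernel-verified Lean document; each statement's English description precedes it below -/
import Mathlib

section
/- Let the operator S = ∂U, derived from the potential U, have φ-structure with characteristics (γ₃,γ₄,Δ₂(φ)), where φ is a balanced N-function with characteristics (γ₁,γ₂). Then U is a balanced N-function satisfying (γ₃/γ₂)·φ''(t) ≤ U''(t) ≤ (γ₄/γ₁)·φ''(t) for all t > 0, and the characteristics of U equals ((γ₃/γ₄)·(γ₁²/γ₂), (γ₄/γ₃)·(γ₂²/γ₁)). -/
open Real Set MeasureTheory Filter Matrix

noncomputable section

/-- The N-function `omega_{p,delta}(t) = int_0^t (delta+s)^(p-2) s ds`. -/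
def omg (p δ : ℝ) (t : ℝ) : ℝ := ∫ s in (0:ℝ)..t, (δ + s) ^ (p - 2) * s

/-- The `A`-approximation of a function `φ`: it equals `φ` on `[0,A]` and is the
second-order Taylor polynomial of `φ` at `A` for `t > A`. -/
def approxA (φ : ℝ → ℝ) (A : ℝ) (t : ℝ) : ℝ :=
  if t ≤ A then φ t
  else (1/2) * deriv (deriv φ) A * t ^ 2 + (deriv φ A - deriv (deriv φ) A * A) * t
    + (φ A - deriv φ A * A + (1/2) * deriv (deriv φ) A * A ^ 2)

/-- `φ` is a regular N-function: continuous, convex, positive for `t > 0`,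
`φ(t)/t → 0` as `t → 0⁺`, `φ(t)/t → ∞` as `t → ∞`, `C¹` on `[0,∞)`, `C²` on `(0,∞)`,
with `φ'' > 0` on `(0,∞)`. -/
structure IsRegularNFunction (φ : ℝ → ℝ) : Prop where
  continuousOn : ContinuousOn φ (Set.Ici 0)
  convexOn : ConvexOn ℝ (Set.Ici 0) φ
  pos : ∀ t : ℝ, 0 < t → 0 < φ t
  tendsto_zero : Filter.Tendsto (fun t => φ t / t) (nhdsWithin 0 (Set.Ioi 0)) (nhds 0)
  tendsto_atTop : Filter.Tendsto (fun t => φ t / t) Filter.atTop Filter.atTop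
  diffAt : ∀ t : ℝ, 0 < t → DifferentiableAt ℝ φ t
  deriv_continuousOn : ContinuousOn (deriv φ) (Set.Ici 0)
  diffAt2 : ∀ t : ℝ, 0 < t → DifferentiableAt ℝ (deriv φ) t
  deriv2_continuousOn : ContinuousOn (deriv (deriv φ)) (Set.Ioi 0)
  deriv2_pos : ∀ t : ℝ, 0 < t → 0 < deriv (deriv φ) t

/-- `φ` is a balanced N-function with characteristics `(γ₁, γ₂)`:
`γ₁ φ'(t) ≤ t φ''(t) ≤ γ₂ φ'(t)` for all `t > 0`. -/
structure IsBalanced (φ : ℝ → ℝ) (γ₁ γ₂ : ℝ) : Prop where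
  regular : IsRegularNFunction φ
  gamma1_mem : γ₁ ∈ Set.Ioc (0:ℝ) 1
  gamma2_ge : 1 ≤ γ₂
  lower : ∀ t : ℝ, 0 < t → γ₁ * deriv φ t ≤ t * deriv (deriv φ) t
  upper : ∀ t : ℝ, 0 < t → t * deriv (deriv φ) t ≤ γ₂ * deriv φ t

/-- `ψ` satisfies the Δ₂-condition with constant `K`. -/
def SatisfiesDelta2 (ψ : ℝ → ℝ) (K : ℝ) : Prop :=
  2 ≤ K ∧ ∀ t : ℝ, 0 ≤ t → ψ (2 * t) ≤ K * ψ t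

/-- The complementary N-function `φ*(t) = ∫₀ᵗ (φ')⁻¹(s) ds`, where `(φ')⁻¹` is the
inverse on `[0,∞)` of the (strictly increasing) derivative `φ'`. -/
def conj (φ : ℝ → ℝ) (t : ℝ) : ℝ :=
  ∫ s in (0:ℝ)..t, Function.invFunOn (deriv φ) (Set.Ici 0) s

abbrev Mat3 := Matrix (Fin 3) (Fin 3) ℝ

/-- The symmetric part `P^sym = (P + Pᵀ)/2`. -/
def symPart (P : Mat3) : Mat3 := (2:ℝ)⁻¹ • (P + Pᵀ)

/-- Frobenius norm of a 3×3 matrix. -/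
def frob (P : Mat3) : ℝ := Real.sqrt (∑ i, ∑ j, (P i j) ^ 2)

/-- Scalar product of matrices `P·Q = Σ_{ij} P_{ij} Q_{ij}`. -/
def dot3 (P Q : Mat3) : ℝ := ∑ i, ∑ j, P i j * Q i j

attribute [local instance] Matrix.frobeniusNormedAddCommGroup Matrix.frobeniusNormedSpace

/-- `U` is an admissible potential: `U ∈ C¹([0,∞)) ∩ C²((0,∞))` with `U(0) = U'(0) = 0`. -/
structure IsPotential (U : ℝ → ℝ) : Prop where
  continuousOn : ContinuousOn U (Set.Ici 0)
  diffAt : ∀ t : ℝ, 0 < t → DifferentiableAt ℝ U t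
  deriv_continuousOn : ContinuousOn (deriv U) (Set.Ici 0)
  diffAt2 : ∀ t : ℝ, 0 < t → DifferentiableAt ℝ (deriv U) t
  deriv2_continuousOn : ContinuousOn (deriv (deriv U)) (Set.Ioi 0)
  zero : U 0 = 0
  deriv_zero : deriv U 0 = 0

/-- `S` is derived from the potential `U`, i.e. `S = ∂U`:
`S(0) = 0` and `S(P) = (U'(|P^sym|)/|P^sym|) P^sym`.  (When `P^sym = 0` the right-hand
side is `0` since it is a scalar multiple of the zero matrix.) -/
def DerivedFrom (S : Mat3 → Mat3) (U : ℝ → ℝ) : Prop :=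
  S 0 = 0 ∧ ∀ P : Mat3,
    S P = (deriv U (frob (symPart P)) / frob (symPart P)) • symPart P

/-- The operator derived from the potential `U^A` (the `A`-approximation of `U`),
i.e. `S^A = ∂(U^A)`. -/
def SAop (U : ℝ → ℝ) (A : ℝ) (P : Mat3) : Mat3 :=
  (deriv (approxA U A) (frob (symPart P)) / frob (symPart P)) • symPart P

/-- `S` has `φ`-structure with characteristics `(γ₃, γ₄, Δ₂(φ))`, where
`a_φ(t) = φ'(t)/t`. -/
structure HasPhiStructure (S : Mat3 → Mat3) (φ : ℝ → ℝ) (γ₃ γ₄ : ℝ) : Prop where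
  gamma3_mem : γ₃ ∈ Set.Ioc (0:ℝ) 1
  gamma4_gt : 1 < γ₄
  sym_dep : ∀ P : Mat3, S P = S (symPart P)
  sym_val : ∀ P : Mat3, (S P)ᵀ = S P
  zero : S 0 = 0
  cont : Continuous S
  smooth : ContDiffOn ℝ 1 S {P : Mat3 | P ≠ 0}
  coercive : ∀ P Q : Mat3, symPart P ≠ 0 →
    γ₃ * (deriv φ (frob (symPart P)) / frob (symPart P)) * frob (symPart Q) ^ 2 ≤
      ∑ i, ∑ j, ∑ k, ∑ l,
        fderiv ℝ S P (Matrix.single k l 1) i j * Q i j * Q k l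
  bounded : ∀ P : Mat3, symPart P ≠ 0 → ∀ i j k l : Fin 3,
    |fderiv ℝ S P (Matrix.single k l 1) i j| ≤
      γ₄ * (deriv φ (frob (symPart P)) / frob (symPart P))

/-!
Testing the `φ`-structure of `S = ∂U` at `P = t E₀₀` in the direction `Q = E₀₀`, where
`S(s E₀₀) = U'(s) E₀₀`, traps `U''(t)` between `γ₃ φ'(t)/t` and `γ₄ φ'(t)/t`; balancedness
of `φ` turns this into `(γ₃/γ₂) φ'' ≤ U'' ≤ (γ₄/γ₁) φ''`. Integrating twice from `0` compares
`U'` with `φ'` and `U` with `φ`, which makes `U` a regular N-function, and the chains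
`t U'' ≥ (γ₃/γ₂) t φ'' ≥ (γ₃/γ₂) γ₁ φ' ≥ (γ₃/γ₂) γ₁ (γ₁/γ₄) U'` and
`t U'' ≤ (γ₄/γ₁) t φ'' ≤ (γ₄/γ₁) γ₂ φ' ≤ (γ₄/γ₁) γ₂ (γ₂/γ₃) U'` give its characteristics.
-/

open Topology

theorem le_of_deriv_le_on_Ici {f g : ℝ → ℝ} {a : ℝ} (hf : ContinuousOn f (Ici a))
    (hg : ContinuousOn g (Ici a)) (hf' : ∀ x, a < x → DifferentiableAt ℝ f x)
    (hg' : ∀ x, a < x → DifferentiableAt ℝ g x) (hle : ∀ x, a < x → deriv f x ≤ deriv g x)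
    (ha : f a ≤ g a) {x : ℝ} (hx : a ≤ x) : f x ≤ g x := by
  have hmono : MonotoneOn (fun y => g y - f y) (Ici a) := by
    refine monotoneOn_of_deriv_nonneg (convex_Ici a) (hg.sub hf) ?_ ?_ <;> rw [interior_Ici]
    · exact fun y hy => ((hg' y hy).sub (hf' y hy)).differentiableWithinAt
    · intro y hy
      rw [deriv_fun_sub (hg' y hy) (hf' y hy), sub_nonneg]
      exact hle y hy
  linarith [hmono self_mem_Ici hx hx]

namespace IsPotential

variable {f g : ℝ → ℝ}

theorem const_mul (hf : IsPotential f) (c : ℝ) : IsPotential (fun t => c * f t) := by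
  have hd : deriv (fun t => c * f t) = fun t => c * deriv f t := deriv_const_mul_field' c
  have hd2 : deriv (deriv fun t => c * f t) = fun t => c * deriv (deriv f) t := by
    rw [hd, deriv_const_mul_field']
  refine ⟨continuousOn_const.mul hf.continuousOn, fun t ht => (hf.diffAt t ht).const_mul c,
    ?_, ?_, ?_, by simp [hf.zero], by simp [hd, hf.deriv_zero]⟩
  · rw [hd]; exact continuousOn_const.mul hf.deriv_continuousOn
  · rw [hd]; exact fun t ht => (hf.diffAt2 t ht).const_mul c
  · rw [hd2]; exact continuousOn_const.mul hf.deriv2_continuousOn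

theorem deriv_le_of_deriv2_le (hf : IsPotential f) (hg : IsPotential g)
    (h : ∀ t, 0 < t → deriv (deriv f) t ≤ deriv (deriv g) t) {t : ℝ} (ht : 0 ≤ t) :
    deriv f t ≤ deriv g t :=
  le_of_deriv_le_on_Ici hf.deriv_continuousOn hg.deriv_continuousOn hf.diffAt2 hg.diffAt2 h
    (by rw [hf.deriv_zero, hg.deriv_zero]) ht

theorem le_of_deriv2_le (hf : IsPotential f) (hg : IsPotential g)
    (h : ∀ t, 0 < t → deriv (deriv f) t ≤ deriv (deriv g) t) {t : ℝ} (ht : 0 ≤ t) :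
    f t ≤ g t :=
  le_of_deriv_le_on_Ici hf.continuousOn hg.continuousOn hf.diffAt hg.diffAt
    (fun s hs => deriv_le_of_deriv2_le hf hg h hs.le) (by rw [hf.zero, hg.zero]) ht

theorem const_mul_le_of_deriv2 (hf : IsPotential f) (hg : IsPotential g) {c : ℝ}
    (h : ∀ t, 0 < t → c * deriv (deriv f) t ≤ deriv (deriv g) t) {t : ℝ} (ht : 0 ≤ t) :
    c * deriv f t ≤ deriv g t ∧ c * f t ≤ g t := by
  have h' (s : ℝ) (hs : 0 < s) : deriv (deriv fun x => c * f x) s ≤ deriv (deriv g) s := by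
    simpa only [deriv_const_mul_field'] using h s hs
  have hderiv := (hf.const_mul c).deriv_le_of_deriv2_le hg h' ht
  rw [deriv_const_mul_field'] at hderiv
  exact ⟨hderiv, (hf.const_mul c).le_of_deriv2_le hg h' ht⟩

theorem le_const_mul_of_deriv2 (hf : IsPotential f) (hg : IsPotential g) {c : ℝ}
    (h : ∀ t, 0 < t → deriv (deriv g) t ≤ c * deriv (deriv f) t) {t : ℝ} (ht : 0 ≤ t) :
    deriv g t ≤ c * deriv f t ∧ g t ≤ c * f t := by
  have h' (s : ℝ) (hs : 0 < s) : deriv (deriv g) s ≤ deriv (deriv fun x => c * f x) s := by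
    simpa only [deriv_const_mul_field'] using h s hs
  have hderiv := hg.deriv_le_of_deriv2_le (hf.const_mul c) h' ht
  rw [deriv_const_mul_field'] at hderiv
  exact ⟨hderiv, hg.le_of_deriv2_le (hf.const_mul c) h' ht⟩

end IsPotential

namespace IsRegularNFunction

variable {φ : ℝ → ℝ}

theorem apply_zero (hφ : IsRegularNFunction φ) : φ 0 = 0 := by
  have hcont : Tendsto φ (𝓝[>] 0) (𝓝 (φ 0)) :=
    (hφ.continuousOn 0 self_mem_Ici).mono_left (nhdsWithin_mono _ Ioi_subset_Ici_self)
  have hprod : Tendsto (fun t => φ t / t * t) (𝓝[>] 0) (𝓝 0) := by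
    simpa using hφ.tendsto_zero.mul (tendsto_nhdsWithin_of_tendsto_nhds tendsto_id)
  refine tendsto_nhds_unique hcont (hprod.congr' ?_)
  filter_upwards [self_mem_nhdsWithin] with t ht using div_mul_cancel₀ _ (ne_of_gt ht)

/-- `φ` need not be differentiable at `0`; if it is not, `deriv φ 0 = 0` is the junk value. -/
theorem deriv_zero (hφ : IsRegularNFunction φ) : deriv φ 0 = 0 := by
  by_cases hd : DifferentiableAt ℝ φ 0
  · have hslope := hd.hasDerivAt.tendsto_slope_zero_right
    simp only [zero_add, hφ.apply_zero, sub_zero, smul_eq_mul] at hslope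
    exact tendsto_nhds_unique hslope (hφ.tendsto_zero.congr fun t => div_eq_inv_mul _ _)
  · exact deriv_zero_of_not_differentiableAt hd

theorem isPotential (hφ : IsRegularNFunction φ) : IsPotential φ :=
  ⟨hφ.continuousOn, hφ.diffAt, hφ.deriv_continuousOn, hφ.diffAt2, hφ.deriv2_continuousOn,
    hφ.apply_zero, hφ.deriv_zero⟩

end IsRegularNFunction

theorem IsPotential.isRegularNFunction_of_deriv2_le {U φ : ℝ → ℝ} (hU : IsPotential U)
    (hφ : IsRegularNFunction φ) {a b : ℝ} (ha : 0 < a)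
    (h : ∀ t, 0 < t →
      a * deriv (deriv φ) t ≤ deriv (deriv U) t ∧ deriv (deriv U) t ≤ b * deriv (deriv φ) t) :
    IsRegularNFunction U := by
  have hlo {t : ℝ} (ht : 0 ≤ t) : a * φ t ≤ U t :=
    (hφ.isPotential.const_mul_le_of_deriv2 hU (fun s hs => (h s hs).1) ht).2
  have hhi {t : ℝ} (ht : 0 ≤ t) : U t ≤ b * φ t :=
    (hφ.isPotential.le_const_mul_of_deriv2 hU (fun s hs => (h s hs).2) ht).2
  have hderiv2_pos (t : ℝ) (ht : 0 < t) : 0 < deriv (deriv U) t :=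
    (mul_pos ha (hφ.deriv2_pos t ht)).trans_le (h t ht).1
  refine ⟨hU.continuousOn, ?_, fun t ht => (mul_pos ha (hφ.pos t ht)).trans_le (hlo ht.le),
    ?_, ?_, hU.diffAt, hU.deriv_continuousOn, hU.diffAt2, hU.deriv2_continuousOn, hderiv2_pos⟩
  · refine convexOn_of_deriv2_nonneg (convex_Ici 0) hU.continuousOn ?_ ?_ ?_ <;>
      rw [interior_Ici]
    · exact fun t ht => (hU.diffAt t ht).differentiableWithinAt
    · exact fun t ht => (hU.diffAt2 t ht).differentiableWithinAt
    · exact fun t ht => (hderiv2_pos t ht).le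
  · have hbound : Tendsto (fun t => b * (φ t / t)) (𝓝[>] 0) (𝓝 0) := by
      simpa using hφ.tendsto_zero.const_mul b
    refine squeeze_zero' ?_ ?_ hbound <;> filter_upwards [self_mem_nhdsWithin] with t ht
    · exact div_nonneg ((mul_nonneg ha.le (hφ.pos t ht).le).trans (hlo ht.le)) ht.le
    · rw [mul_div_assoc']
      exact div_le_div_of_nonneg_right (hhi ht.le) ht.le
  · refine tendsto_atTop_mono' _ ?_ (hφ.tendsto_atTop.const_mul_atTop ha)
    filter_upwards [eventually_gt_atTop 0] with t ht
    rw [mul_div_assoc']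
    exact div_le_div_of_nonneg_right (hlo ht.le) ht.le

namespace IsBalanced

variable {φ : ℝ → ℝ} {γ₁ γ₂ : ℝ}

theorem deriv2_div_le (hφ : IsBalanced φ γ₁ γ₂) {t : ℝ} (ht : 0 < t) :
    deriv (deriv φ) t / γ₂ ≤ deriv φ t / t := by
  rw [div_le_div_iff₀ (zero_lt_one.trans_le hφ.gamma2_ge) ht]
  linarith [hφ.upper t ht]

theorem deriv_div_le (hφ : IsBalanced φ γ₁ γ₂) {t : ℝ} (ht : 0 < t) :
    deriv φ t / t ≤ deriv (deriv φ) t / γ₁ := by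
  rw [div_le_div_iff₀ ht hφ.gamma1_mem.1]
  linarith [hφ.lower t ht]

theorem of_deriv2_le {U : ℝ → ℝ} {a b : ℝ} (hφ : IsBalanced φ γ₁ γ₂) (hU : IsPotential U)
    (ha : 0 < a)
    (h : ∀ t, 0 < t →
      a * deriv (deriv φ) t ≤ deriv (deriv U) t ∧ deriv (deriv U) t ≤ b * deriv (deriv φ) t) :
    IsBalanced U (a * γ₁ / b) (b * γ₂ / a) := by
  obtain ⟨hγ₁, hγ₁_le⟩ := hφ.gamma1_mem
  have hab : a ≤ b :=
    le_of_mul_le_mul_right ((h 1 one_pos).1.trans (h 1 one_pos).2) (hφ.regular.deriv2_pos 1 one_pos)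
  have hb : 0 < b := ha.trans_le hab
  have hlo {t : ℝ} (ht : 0 ≤ t) : a * deriv φ t ≤ deriv U t :=
    (hφ.regular.isPotential.const_mul_le_of_deriv2 hU (fun s hs => (h s hs).1) ht).1
  have hhi {t : ℝ} (ht : 0 ≤ t) : deriv U t ≤ b * deriv φ t :=
    (hφ.regular.isPotential.le_const_mul_of_deriv2 hU (fun s hs => (h s hs).2) ht).1
  refine ⟨hU.isRegularNFunction_of_deriv2_le hφ.regular ha h, ⟨by positivity, ?_⟩, ?_, ?_, ?_⟩
  · rw [div_le_one hb]
    nlinarith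
  · rw [le_div_iff₀ ha]
    nlinarith [hφ.gamma2_ge]
  · intro t ht
    calc a * γ₁ / b * deriv U t ≤ a * γ₁ / b * (b * deriv φ t) :=
          mul_le_mul_of_nonneg_left (hhi ht.le) (by positivity)
      _ = a * (γ₁ * deriv φ t) := by field_simp
      _ ≤ a * (t * deriv (deriv φ) t) := mul_le_mul_of_nonneg_left (hφ.lower t ht) ha.le
      _ = t * (a * deriv (deriv φ) t) := by ring
      _ ≤ t * deriv (deriv U) t := mul_le_mul_of_nonneg_left (h t ht).1 ht.le
  · intro t ht
    calc t * deriv (deriv U) t ≤ t * (b * deriv (deriv φ) t) :=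
          mul_le_mul_of_nonneg_left (h t ht).2 ht.le
      _ = b * (t * deriv (deriv φ) t) := by ring
      _ ≤ b * (γ₂ * deriv φ t) := mul_le_mul_of_nonneg_left (hφ.upper t ht) hb.le
      _ = b * γ₂ / a * (a * deriv φ t) := by field_simp
      _ ≤ b * γ₂ / a * deriv U t :=
          mul_le_mul_of_nonneg_left (hlo ht.le) (div_nonneg (by nlinarith [hφ.gamma2_ge]) ha.le)

end IsBalanced

section MatrixCalculus

variable {S : Mat3 → Mat3} {U φ : ℝ → ℝ} {γ₃ γ₄ : ℝ}

theorem symPart_eq_self {P : Mat3} (hP : Pᵀ = P) : symPart P = P := by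
  rw [symPart, hP, ← two_smul ℝ P, smul_smul]
  norm_num

theorem frob_smul_single {s : ℝ} (hs : 0 ≤ s) (i j : Fin 3) :
    frob (s • Matrix.single i j 1) = s := by
  have hsum : ∑ k, ∑ l, ((s • Matrix.single i j (1 : ℝ)) k l) ^ 2 = s ^ 2 := by
    simp [Matrix.single_apply, ite_and]
  rw [frob, hsum, Real.sqrt_sq hs]

theorem symPart_smul_single (s : ℝ) (i : Fin 3) :
    symPart (s • Matrix.single i i 1) = s • Matrix.single i i 1 :=
  symPart_eq_self (by rw [transpose_smul, transpose_single])

theorem DerivedFrom.apply_smul_single (hSU : DerivedFrom S U) {s : ℝ} (hs : 0 < s) (i : Fin 3) :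
    S (s • Matrix.single i i 1) = deriv U s • Matrix.single i i 1 := by
  rw [hSU.2, symPart_smul_single, frob_smul_single hs.le, smul_smul, div_mul_cancel₀ _ hs.ne']

theorem DerivedFrom.fderiv_smul_single (hSU : DerivedFrom S U) (hU : IsPotential U) {t : ℝ}
    (ht : 0 < t) (i : Fin 3) (hS : DifferentiableAt ℝ S (t • Matrix.single i i 1)) :
    fderiv ℝ S (t • Matrix.single i i 1) (Matrix.single i i 1) =
      deriv (deriv U) t • Matrix.single i i 1 := by
  have hline : HasDerivAt (fun s : ℝ => s • Matrix.single i i (1 : ℝ)) (Matrix.single i i 1) t :=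
    ((hasDerivAt_id t).smul_const _).congr_deriv (one_smul ℝ _)
  have hcomp := hS.hasFDerivAt.comp_hasDerivAt t hline
  have heq : (fun s : ℝ => S (s • Matrix.single i i 1)) =ᶠ[𝓝 t]
      fun s => deriv U s • Matrix.single i i 1 := by
    filter_upwards [Ioi_mem_nhds ht] with s hs using hSU.apply_smul_single hs i
  exact (hcomp.congr_of_eventuallyEq heq.symm).unique
    ((hU.diffAt2 t ht).hasDerivAt.smul_const _)

theorem sum_apply_single_mul_single (F : Mat3 →L[ℝ] Mat3) (i : Fin 3) :
    ∑ j, ∑ k, ∑ l, ∑ m, F (Matrix.single l m 1) j k * Matrix.single i i (1 : ℝ) j k *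
      Matrix.single i i (1 : ℝ) l m = F (Matrix.single i i 1) i i := by
  simp [Matrix.single_apply, ite_and]

theorem HasPhiStructure.deriv2_mem_Icc (hstr : HasPhiStructure S φ γ₃ γ₄) (hU : IsPotential U)
    (hSU : DerivedFrom S U) {t : ℝ} (ht : 0 < t) :
    deriv (deriv U) t ∈ Icc (γ₃ * (deriv φ t / t)) (γ₄ * (deriv φ t / t)) := by
  have hP : (t • Matrix.single 0 0 1 : Mat3) ≠ 0 := fun h => ht.ne' (by simpa using congrFun₂ h 0 0)
  have hsym : symPart (t • Matrix.single 0 0 1) ≠ 0 := by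
    rw [symPart_smul_single]
    exact hP
  have hfrob : frob (symPart (t • Matrix.single 0 0 1)) = t := by
    rw [symPart_smul_single, frob_smul_single ht.le]
  have hE : frob (symPart (Matrix.single 0 0 1)) = 1 := by
    rw [symPart_eq_self (transpose_single 0 0 1)]
    simpa using frob_smul_single zero_le_one 0 0
  have hS : DifferentiableAt ℝ S (t • Matrix.single 0 0 1) :=
    (hstr.smooth.contDiffAt (isOpen_ne.mem_nhds hP)).differentiableAt one_ne_zero
  have hentry : fderiv ℝ S (t • Matrix.single 0 0 1) (Matrix.single 0 0 1) 0 0 =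
      deriv (deriv U) t := by
    rw [hSU.fderiv_smul_single hU ht 0 hS]
    simp
  have hco := hstr.coercive _ (Matrix.single 0 0 1) hsym
  have hbd := hstr.bounded _ hsym 0 0 0 0
  rw [hfrob, hE, sum_apply_single_mul_single, hentry, one_pow, mul_one] at hco
  rw [hfrob, hentry] at hbd
  exact ⟨hco, (abs_le.1 hbd).2⟩

end MatrixCalculus

/-- Let `S = ∂U` have `φ`-structure with characteristics
`(γ₃,γ₄,Δ₂(φ))` where `φ` is balanced with characteristics `(γ₁,γ₂)`. Then `U` is a
balanced N-function with `(γ₃/γ₂) φ''(t) ≤ U''(t) ≤ (γ₄/γ₁) φ''(t)` for `t > 0` and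
characteristics `((γ₃/γ₄)(γ₁²/γ₂), (γ₄/γ₃)(γ₂²/γ₁))`. -/
theorem stmt10 (φ U : ℝ → ℝ) (S : Mat3 → Mat3) (γ₁ γ₂ γ₃ γ₄ : ℝ)
    (hφ : IsBalanced φ γ₁ γ₂) (hU : IsPotential U) (hSU : DerivedFrom S U)
    (hstr : HasPhiStructure S φ γ₃ γ₄) :
    IsBalanced U ((γ₃ / γ₄) * (γ₁ ^ 2 / γ₂)) ((γ₄ / γ₃) * (γ₂ ^ 2 / γ₁)) ∧
    ∀ t : ℝ, 0 < t →
      (γ₃ / γ₂) * deriv (deriv φ) t ≤ deriv (deriv U) t ∧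
      deriv (deriv U) t ≤ (γ₄ / γ₁) * deriv (deriv φ) t := by
  have hγ₁ : 0 < γ₁ := hφ.gamma1_mem.1
  have hγ₂ : 0 < γ₂ := zero_lt_one.trans_le hφ.gamma2_ge
  have hγ₃ : 0 < γ₃ := hstr.gamma3_mem.1
  have hγ₄ : 0 < γ₄ := zero_lt_one.trans hstr.gamma4_gt
  have hcmp (t : ℝ) (ht : 0 < t) : (γ₃ / γ₂) * deriv (deriv φ) t ≤ deriv (deriv U) t ∧
      deriv (deriv U) t ≤ (γ₄ / γ₁) * deriv (deriv φ) t := by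
    obtain ⟨hlo, hhi⟩ := hstr.deriv2_mem_Icc hU hSU ht
    constructor
    · calc (γ₃ / γ₂) * deriv (deriv φ) t = γ₃ * (deriv (deriv φ) t / γ₂) := by ring
        _ ≤ γ₃ * (deriv φ t / t) := mul_le_mul_of_nonneg_left (hφ.deriv2_div_le ht) hγ₃.le
        _ ≤ deriv (deriv U) t := hlo
    · calc deriv (deriv U) t ≤ γ₄ * (deriv φ t / t) := hhi
        _ ≤ γ₄ * (deriv (deriv φ) t / γ₁) := mul_le_mul_of_nonneg_left (hφ.deriv_div_le ht) hγ₄.le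
        _ = (γ₄ / γ₁) * deriv (deriv φ) t := by ring
  refine ⟨?_, hcmp⟩
  convert hφ.of_deriv2_le hU (div_pos hγ₃ hγ₂) hcmp using 1 <;> field_simp
end
end

section
/- Let φ be a regular N-function whose derivative φ' satisfies the Δ₂-condition. Then there exist constants 0 < c ≤ C depending only on Δ₂(φ') such that for all P, Q ∈ ℝ^{n×n}: c·φ_{|Q|}(|P − Q|) ≤ φ_{|P|}(|P − Q|) ≤ C·φ_{|Q|}(|P − Q|). -/
open Real Set MeasureTheory Filter Matrix

noncomputable section

/-- The shifted N-function `φ_a(t) = ∫₀ᵗ φ'(a+s)·s/(a+s) ds`. -/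
def shift (φ : ℝ → ℝ) (a : ℝ) (t : ℝ) : ℝ :=
  ∫ s in (0:ℝ)..t, deriv φ (a + s) * s / (a + s)

/-- Frobenius norm of an `n×n` matrix. -/
def frobN {n : ℕ} (P : Matrix (Fin n) (Fin n) ℝ) : ℝ :=
  Real.sqrt (∑ i, ∑ j, (P i j) ^ 2)

section Aux

variable {φ : ℝ → ℝ}

lemma aux_strictMono (hφ : IsRegularNFunction φ) : StrictMonoOn (deriv φ) (Set.Ici 0) := by
  apply strictMonoOn_of_deriv_pos (convex_Ici 0) hφ.deriv_continuousOn
  intro x hx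
  rw [interior_Ici] at hx
  exact hφ.deriv2_pos x hx

lemma aux_phi_zero (hφ : IsRegularNFunction φ) : φ 0 = 0 := by
  have h1 : Tendsto φ (nhdsWithin 0 (Set.Ioi 0)) (nhds (φ 0)) :=
    (hφ.continuousOn 0 (mem_Ici.mpr le_rfl)).mono_left (nhdsWithin_mono 0 Ioi_subset_Ici_self)
  have h2 : Tendsto φ (nhdsWithin 0 (Set.Ioi 0)) (nhds 0) := by
    have hmul : Tendsto (fun t => (φ t / t) * t) (nhdsWithin 0 (Set.Ioi 0)) (nhds (0 * 0)) :=
      hφ.tendsto_zero.mul (tendsto_id.mono_left nhdsWithin_le_nhds)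
    rw [zero_mul] at hmul
    refine hmul.congr' ?_
    filter_upwards [self_mem_nhdsWithin] with t ht
    field_simp [ne_of_gt (mem_Ioi.mp ht)]
  exact tendsto_nhds_unique h1 h2

lemma aux_deriv_pos (hφ : IsRegularNFunction φ) : ∀ y : ℝ, 0 < y → 0 < deriv φ y := by
  intro y hy
  obtain ⟨c, hc, hceq⟩ := exists_hasDerivAt_eq_slope φ (deriv φ) hy
    (hφ.continuousOn.mono (Icc_subset_Ici_self))
    (fun x hx => (hφ.diffAt x hx.1).hasDerivAt)
  have hcpos : 0 < deriv φ c := by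
    rw [hceq, aux_phi_zero hφ, sub_zero]
    rw [sub_zero]; exact div_pos (hφ.pos y hy) hy
  exact lt_trans hcpos (aux_strictMono hφ (mem_Ici.mpr hc.1.le) (mem_Ici.mpr hy.le) hc.2)


lemma aux_g_nonneg (hφ : IsRegularNFunction φ) {a : ℝ} (ha : 0 ≤ a) {s : ℝ} (hs : 0 ≤ s) :
    0 ≤ deriv φ (a + s) * s / (a + s) := by
  rcases eq_or_lt_of_le hs with h0 | h0
  · simp [← h0]
  · exact div_nonneg (mul_nonneg (aux_deriv_pos hφ _ (by linarith)).le hs) (by linarith)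

lemma aux_g_mono (hφ : IsRegularNFunction φ) {a : ℝ} (ha : 0 ≤ a) :
    MonotoneOn (fun s => deriv φ (a + s) * s / (a + s)) (Set.Ici 0) := by
  intro s hs s' hs' hss'
  simp only
  rcases eq_or_lt_of_le (mem_Ici.mp hs) with h0 | h0
  · rw [← h0]
    simpa using aux_g_nonneg hφ ha (mem_Ici.mp hs')
  · have hs'0 : 0 < s' := lt_of_lt_of_le h0 hss'
    have has : 0 < a + s := by linarith
    have has' : 0 < a + s' := by linarith
    rw [mul_div_assoc, mul_div_assoc]
    apply mul_le_mul
    · exact (aux_strictMono hφ).monotoneOn (mem_Ici.mpr (by linarith)) (mem_Ici.mpr (by linarith))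
        (by linarith)
    · rw [div_le_div_iff₀ has has']
      nlinarith
    · exact div_nonneg h0.le has.le
    · exact (aux_deriv_pos hφ _ has').le

lemma aux_intble (hφ : IsRegularNFunction φ) {a : ℝ} (ha : 0 ≤ a) {t₁ t₂ : ℝ}
    (h1 : 0 ≤ t₁) (h2 : t₁ ≤ t₂) :
    IntervalIntegrable (fun s => deriv φ (a + s) * s / (a + s)) volume t₁ t₂ := by
  apply MonotoneOn.intervalIntegrable
  apply (aux_g_mono hφ ha).mono
  rw [uIcc_of_le h2]
  exact (Icc_subset_Ici_self).trans (Ici_subset_Ici.mpr h1)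

lemma aux_upper (hφ : IsRegularNFunction φ) {a t : ℝ} (ha : 0 ≤ a) (ht : 0 ≤ t) :
    shift φ a t ≤ t * (deriv φ (a + t) * t / (a + t)) := by
  have h := intervalIntegral.integral_mono_on ht (aux_intble hφ ha le_rfl ht)
    (intervalIntegrable_const) (fun x hx => (aux_g_mono hφ ha) (mem_Ici.mpr hx.1)
      (mem_Ici.mpr ht) hx.2)
  rw [intervalIntegral.integral_const] at h
  simpa [shift, smul_eq_mul] using h

lemma aux_lower (hφ : IsRegularNFunction φ) {a t : ℝ} (ha : 0 ≤ a) (ht : 0 ≤ t) :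
    (t/2) * (deriv φ (a + t/2) * (t/2) / (a + t/2)) ≤ shift φ a t := by
  have ht2 : (0:ℝ) ≤ t/2 := by linarith
  have ht2' : t/2 ≤ t := by linarith
  have hsplit := intervalIntegral.integral_add_adjacent_intervals
    (aux_intble hφ ha le_rfl ht2) (aux_intble hφ ha ht2 ht2') (μ := volume)
  have h1 : 0 ≤ ∫ s in (0:ℝ)..(t/2), deriv φ (a + s) * s / (a + s) :=
    intervalIntegral.integral_nonneg ht2 (fun x hx => aux_g_nonneg hφ ha hx.1)
  have h2 : (t/2) * (deriv φ (a + t/2) * (t/2) / (a + t/2)) ≤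
      ∫ s in (t/2)..t, deriv φ (a + s) * s / (a + s) := by
    have h := intervalIntegral.integral_mono_on ht2' (intervalIntegrable_const)
      (aux_intble hφ ha ht2 ht2') (fun x hx => (aux_g_mono hφ ha) (mem_Ici.mpr ht2)
        (mem_Ici.mpr (ht2.trans hx.1)) hx.1)
    rw [intervalIntegral.integral_const] at h
    calc (t/2) * (deriv φ (a + t/2) * (t/2) / (a + t/2))
        = (t - t/2) • (deriv φ (a + t/2) * (t/2) / (a + t/2)) := by
          rw [smul_eq_mul]; ring
      _ ≤ _ := h
  rw [shift, ← hsplit]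
  linarith


lemma aux_key {K : ℝ} (hφ : IsRegularNFunction φ) (hd2 : SatisfiesDelta2 (deriv φ) K)
    {a b t : ℝ} (ha : 0 ≤ a) (hb : 0 ≤ b) (ht : 0 ≤ t) (hab : a ≤ b + t) (hba : b ≤ a + t) :
    shift φ a t ≤ 8 * K ^ 2 * shift φ b t := by
  have hK : 2 ≤ K := hd2.1
  rcases eq_or_lt_of_le ht with h0 | h0
  · subst h0
    simp [shift]
  -- notation
  set A := deriv φ (a + t) with hA
  set Bh := deriv φ (b + t/2) with hBh
  have hat : 0 < a + t := by linarith
  have hbt2 : 0 < b + t/2 := by linarith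
  have hA0 : 0 ≤ A := (aux_deriv_pos hφ _ hat).le
  have hBh0 : 0 ≤ Bh := (aux_deriv_pos hφ _ hbt2).le
  have hmono := (aux_strictMono hφ).monotoneOn
  -- A ≤ K * deriv φ (b+t)
  have hAB : A ≤ K * deriv φ (b + t) := by
    have h1 : A ≤ deriv φ (2 * (b + t)) :=
      hmono (mem_Ici.mpr hat.le) (mem_Ici.mpr (by linarith)) (by linarith)
    have h2 := hd2.2 (b + t) (by linarith)
    linarith
  -- deriv φ (b+t) ≤ K * Bh
  have hB : deriv φ (b + t) ≤ K * Bh := by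
    have h2 := hd2.2 ((b + t) / 2) (by linarith)
    have he : 2 * ((b + t) / 2) = b + t := by ring
    rw [he] at h2
    have h3 : deriv φ ((b + t) / 2) ≤ Bh :=
      hmono (mem_Ici.mpr (by linarith)) (mem_Ici.mpr hbt2.le) (by linarith)
    nlinarith
  have hAK : A ≤ K ^ 2 * Bh := by nlinarith
  calc shift φ a t ≤ t * (A * t / (a + t)) := aux_upper hφ ha ht
    _ ≤ 8 * K ^ 2 * ((t/2) * (Bh * (t/2) / (b + t/2))) := by
        have e1 : t * (A * t / (a + t)) = t ^ 2 * A / (a + t) := by ring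
        have e2 : 8 * K ^ 2 * ((t/2) * (Bh * (t/2) / (b + t/2)))
            = 2 * K ^ 2 * t ^ 2 * Bh / (b + t/2) := by ring
        rw [e1, e2, div_le_div_iff₀ hat hbt2]
        have h3 : A * (b + t/2) ≤ K ^ 2 * Bh * (b + t/2) :=
          mul_le_mul_of_nonneg_right hAK hbt2.le
        have h4 : K ^ 2 * Bh * (b + t/2) ≤ K ^ 2 * Bh * (2 * (a + t)) :=
          mul_le_mul_of_nonneg_left (by linarith) (mul_nonneg (sq_nonneg K) hBh0)
        have h6 := mul_le_mul_of_nonneg_left (h3.trans h4) (sq_nonneg t)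
        nlinarith
    _ ≤ 8 * K ^ 2 * shift φ b t := by
        have := aux_lower hφ hb ht
        nlinarith [sq_nonneg K]

end Aux

def toE {n : ℕ} (P : Matrix (Fin n) (Fin n) ℝ) : EuclideanSpace ℝ (Fin n × Fin n) :=
  (WithLp.equiv 2 ((Fin n × Fin n) → ℝ)).symm (fun p => P p.1 p.2)

lemma frobN_eq_norm {n : ℕ} (P : Matrix (Fin n) (Fin n) ℝ) : frobN P = ‖toE P‖ := by
  rw [frobN, EuclideanSpace.norm_eq]
  congr 1
  rw [Fintype.sum_prod_type]
  simp [toE, Real.norm_eq_abs, sq_abs]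

lemma toE_add {n : ℕ} (X Y : Matrix (Fin n) (Fin n) ℝ) : toE (X + Y) = toE X + toE Y := rfl

lemma frobN_add_le {n : ℕ} (X Y : Matrix (Fin n) (Fin n) ℝ) :
    frobN (X + Y) ≤ frobN X + frobN Y := by
  rw [frobN_eq_norm, frobN_eq_norm, frobN_eq_norm, toE_add]
  exact norm_add_le _ _

lemma frobN_neg {n : ℕ} (X : Matrix (Fin n) (Fin n) ℝ) : frobN (-X) = frobN X := by
  rw [frobN_eq_norm, frobN_eq_norm]
  have : toE (-X) = -toE X := rfl
  rw [this, norm_neg]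


/-- Let `φ` be a regular N-function whose derivative `φ'` satisfies
the Δ₂-condition.  Then there are `0 < c ≤ C` depending only on `Δ₂(φ')` such that for
all `P, Q ∈ ℝ^{n×n}`: `c φ_{|Q|}(|P−Q|) ≤ φ_{|P|}(|P−Q|) ≤ C φ_{|Q|}(|P−Q|)`. -/
theorem stmt14 (n : ℕ) (K : ℝ) (hK : 2 ≤ K) :
    ∃ c C : ℝ, 0 < c ∧ c ≤ C ∧
      ∀ φ : ℝ → ℝ, IsRegularNFunction φ → SatisfiesDelta2 (deriv φ) K →
        ∀ P Q : Matrix (Fin n) (Fin n) ℝ,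
          c * shift φ (frobN Q) (frobN (P - Q)) ≤ shift φ (frobN P) (frobN (P - Q)) ∧
          shift φ (frobN P) (frobN (P - Q)) ≤ C * shift φ (frobN Q) (frobN (P - Q)) := by
  have hpos : (0:ℝ) < 8 * K ^ 2 := by nlinarith
  refine ⟨(8 * K ^ 2)⁻¹, 8 * K ^ 2, inv_pos.mpr hpos, ?_, ?_⟩
  · rw [inv_eq_one_div, div_le_iff₀ hpos]
    nlinarith [sq_nonneg (K^2), sq_nonneg K, sq_nonneg (8*K^2 - 1)]
  intro φ hφ hd2 P Q
  set a := frobN P with haeq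
  set b := frobN Q with hbeq
  set t := frobN (P - Q) with hteq
  have ha : 0 ≤ a := Real.sqrt_nonneg _
  have hb : 0 ≤ b := Real.sqrt_nonneg _
  have ht : 0 ≤ t := Real.sqrt_nonneg _
  have hab : a ≤ b + t := by
    have hPQ : P = Q + (P - Q) := by abel
    calc a = frobN (Q + (P - Q)) := by rw [haeq, ← hPQ]
      _ ≤ b + t := frobN_add_le _ _
  have hba : b ≤ a + t := by
    have hQP : Q = P + (-(P - Q)) := by abel
    calc b = frobN (P + (-(P - Q))) := by rw [hbeq, ← hQP]
      _ ≤ a + frobN (-(P - Q)) := frobN_add_le _ _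
      _ = a + t := by rw [frobN_neg]
  constructor
  · rw [inv_mul_le_iff₀ hpos]
    exact aux_key hφ hd2 hb ha ht hba hab
  · exact aux_key hφ hd2 ha hb ht hab hba


end
end

section
/- Let p ∈ (1,2], p' := p/(p−1) and δ ∈ [0,∞), and set ω := ω_{p,δ}. Then there exists a constant C depending only on p such that the complementary function satisfies ω*(t) ≤ C·(δ^p + t^{p'}) for all t ≥ 0. -/
open Real Set MeasureTheory Filter Matrix

noncomputable section

/-!
For `x ≥ δ` we have `δ + x ≤ 2x`, so `p ≤ 2` gives `ω'(x) ≥ 2^(p-2) x^(p-1) ≥ x^(p-1) / 2`.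
Hence `(ω')⁻¹(s) ≤ δ + (2s)^(1/(p-1))`, and integrating over `[0, t]` gives
`ω*(t) ≤ δ t + 2^(1/(p-1)) t^p'`; Young's inequality `δ t ≤ δ^p + t^p'` finishes.
-/

open Function

section

variable {p δ : ℝ}

theorem continuousOn_omg_integrand (hp : 1 < p) (hδ : 0 ≤ δ) :
    ContinuousOn (fun s : ℝ => (δ + s) ^ (p - 2) * s) (Ici 0) := by
  intro x hx
  rcases (add_nonneg hδ hx : 0 ≤ δ + x).lt_or_eq with hpos | hzero
  · exact ((continuousAt_const.add continuousAt_id).rpow_const (Or.inl hpos.ne')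
      |>.mul continuousAt_id).continuousWithinAt
  · obtain ⟨rfl, rfl⟩ : δ = 0 ∧ x = 0 := by constructor <;> linarith [mem_Ici.mp hx]
    -- for `δ = 0` the integrand is `s ^ (p - 1)` on `[0, ∞)`, also at `0` where `0 ^ (p - 2) = 0`
    refine ((continuousAt_rpow_const 0 (p - 1) (Or.inr (by linarith))).continuousWithinAt).congr
      (fun y hy => ?_) ?_
    · rw [zero_add, ← rpow_add_one' (mem_Ici.mp hy) (by linarith)]
      ring_nf
    · simp [zero_rpow (by linarith : p - 1 ≠ 0)]

theorem deriv_omg (hp : 1 < p) (hδ : 0 ≤ δ) {x : ℝ} (hx : 0 < x) :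
    deriv (omg p δ) x = (δ + x) ^ (p - 2) * x := by
  have hcont := continuousOn_omg_integrand hp hδ
  refine (intervalIntegral.integral_hasDerivAt_right ?_
    ((hcont.mono Ioi_subset_Ici_self).stronglyMeasurableAtFilter isOpen_Ioi x hx)
    (hcont.continuousAt (Ici_mem_nhds hx))).deriv
  exact (hcont.mono (by simp [uIcc_of_le hx.le, Icc_subset_Ici_self])).intervalIntegrable

theorem rpow_sub_one_le_two_mul_omg_integrand (hp₁ : 1 ≤ p) (hp₂ : p ≤ 2) (hδ : 0 ≤ δ) {x : ℝ}
    (hδx : δ ≤ x) (hx : 0 < x) : x ^ (p - 1) ≤ 2 * ((δ + x) ^ (p - 2) * x) := by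
  have hpow : 2 * ((2 * x) ^ (p - 2) * x) = 2 ^ (p - 1) * x ^ (p - 1) := by
    rw [show p - 1 = p - 2 + 1 by ring, mul_rpow zero_le_two hx.le,
      rpow_add_one two_ne_zero, rpow_add_one hx.ne']
    ring
  calc x ^ (p - 1) ≤ 2 ^ (p - 1) * x ^ (p - 1) :=
        le_mul_of_one_le_left (by positivity) (one_le_rpow one_le_two (by linarith))
    _ = 2 * ((2 * x) ^ (p - 2) * x) := hpow.symm
    _ ≤ 2 * ((δ + x) ^ (p - 2) * x) := by
        refine mul_le_mul_of_nonneg_left (mul_le_mul_of_nonneg_right ?_ hx.le) zero_le_two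
        exact rpow_le_rpow_of_nonpos (by linarith) (by linarith) (by linarith)

theorem mem_image_deriv_omg (hp₁ : 1 < p) (hp₂ : p ≤ 2) (hδ : 0 ≤ δ) {s : ℝ} (hs : 0 < s) :
    s ∈ deriv (omg p δ) '' Ici 0 := by
  set M := δ + (2 * s) ^ (p - 1)⁻¹
  have hM : 0 < (2 * s) ^ (p - 1)⁻¹ := by positivity
  have hsM : s ≤ (δ + M) ^ (p - 2) * M := by
    have hMp : 2 * s ≤ M ^ (p - 1) :=
      calc 2 * s = ((2 * s) ^ (p - 1)⁻¹) ^ (p - 1) :=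
            (rpow_inv_rpow (by positivity) (by linarith)).symm
        _ ≤ M ^ (p - 1) := rpow_le_rpow hM.le (by linarith) (by linarith)
    linarith [rpow_sub_one_le_two_mul_omg_integrand hp₁.le hp₂ hδ (le_add_of_nonneg_right hM.le)
      (by positivity : 0 < M)]
  obtain ⟨x, hx, hxs⟩ := intermediate_value_Icc (by positivity : (0 : ℝ) ≤ M)
    ((continuousOn_omg_integrand hp₁ hδ).mono Icc_subset_Ici_self) ⟨by simpa using hs.le, hsM⟩
  have hx₀ : 0 < x := by
    rcases hx.1.eq_or_lt with rfl | hx₀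
    · simp only [mul_zero] at hxs
      linarith
    · exact hx₀
  exact ⟨x, hx₀.le, (deriv_omg hp₁ hδ hx₀).trans hxs⟩

theorem le_of_deriv_omg_eq (hp₁ : 1 < p) (hp₂ : p ≤ 2) (hδ : 0 ≤ δ) {s x : ℝ} (hs : 0 ≤ s)
    (hx : 0 ≤ x) (h : deriv (omg p δ) x = s) : x ≤ δ + (2 * s) ^ (p - 1)⁻¹ := by
  rcases le_or_gt x δ with hxδ | hδx
  · linarith [rpow_nonneg (by positivity : (0 : ℝ) ≤ 2 * s) (p - 1)⁻¹]
  have hx₀ : 0 < x := hδ.trans_lt hδx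
  rw [deriv_omg hp₁ hδ hx₀] at h
  have hxs : x ^ (p - 1) ≤ 2 * s :=
    h ▸ rpow_sub_one_le_two_mul_omg_integrand hp₁.le hp₂ hδ hδx.le hx₀
  calc x = (x ^ (p - 1)) ^ (p - 1)⁻¹ := (rpow_rpow_inv hx (by linarith)).symm
    _ ≤ (2 * s) ^ (p - 1)⁻¹ := rpow_le_rpow (by positivity) hxs (by simp; linarith)
    _ ≤ δ + (2 * s) ^ (p - 1)⁻¹ := le_add_of_nonneg_left hδ

theorem invFunOn_deriv_omg_le (hp₁ : 1 < p) (hp₂ : p ≤ 2) (hδ : 0 ≤ δ) {s : ℝ} (hs : 0 < s) :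
    invFunOn (deriv (omg p δ)) (Ici 0) s ≤ δ + (2 * s) ^ (p - 1)⁻¹ :=
  have h := mem_image_deriv_omg hp₁ hp₂ hδ hs
  le_of_deriv_omg_eq hp₁ hp₂ hδ hs.le (invFunOn_mem h) (invFunOn_eq h)

end

theorem conj_le_mul_of_le {φ : ℝ → ℝ} {t B : ℝ} (ht : 0 ≤ t) (hB : 0 ≤ B)
    (h : ∀ s ∈ Ioo 0 t, invFunOn (deriv φ) (Ici 0) s ≤ B) : conj φ t ≤ t * B := by
  by_cases hint : IntervalIntegrable (invFunOn (deriv φ) (Ici 0)) volume 0 t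
  · calc conj φ t ≤ ∫ _ in 0..t, B :=
          intervalIntegral.integral_mono_on_of_le_Ioo ht hint intervalIntegrable_const h
      _ = t * B := by simp
  · rw [conj, intervalIntegral.integral_undef hint]
    positivity

theorem mul_le_rpow_add_rpow {a b p q : ℝ} (ha : 0 ≤ a) (hb : 0 ≤ b) (hpq : p.HolderConjugate q) :
    a * b ≤ a ^ p + b ^ q := by
  have := young_inequality_of_nonneg ha hb hpq
  have := div_le_self (rpow_nonneg ha p) hpq.lt.le
  have := div_le_self (rpow_nonneg hb q) hpq.symm.lt.le
  linarith

/-- For `p ∈ (1,2]`, `p' = p/(p−1)`, there is `C > 0` depending only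
on `p` such that for all `δ ≥ 0` the complementary function of `ω = ω_{p,δ}` satisfies
`ω*(t) ≤ C (δ^p + t^{p'})` for all `t ≥ 0`. -/
theorem stmt16 (p : ℝ) (hp : p ∈ Set.Ioc (1:ℝ) 2) :
    ∃ C : ℝ, 0 < C ∧
      ∀ δ : ℝ, 0 ≤ δ → ∀ t : ℝ, 0 ≤ t →
        conj (omg p δ) t ≤ C * (δ ^ p + t ^ (p / (p - 1))) := by
  obtain ⟨hp₁, hp₂⟩ := hp
  have hpq : p.HolderConjugate (p / (p - 1)) := .conjExponent hp₁
  have hq : (p - 1)⁻¹ + 1 = p / (p - 1) := by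
    field_simp [(by linarith : p - 1 ≠ 0)]
    ring
  refine ⟨1 + 2 ^ (p - 1)⁻¹, by positivity, fun δ hδ t ht => ?_⟩
  have hbound : ∀ s ∈ Ioo 0 t,
      invFunOn (deriv (omg p δ)) (Ici 0) s ≤ δ + (2 * t) ^ (p - 1)⁻¹ := fun s hs =>
    (invFunOn_deriv_omg_le hp₁ hp₂ hδ hs.1).trans <| add_le_add_right
      (rpow_le_rpow (by linarith [hs.1]) (by linarith [hs.2]) (by simp; linarith)) δ
  have hpow : t * (2 * t) ^ (p - 1)⁻¹ = 2 ^ (p - 1)⁻¹ * t ^ (p / (p - 1)) := by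
    rw [mul_rpow zero_le_two ht, ← hq, rpow_add_one' ht (by rw [hq]; exact hpq.symm.pos.ne')]
    ring
  have hcross : 0 ≤ 2 ^ (p - 1)⁻¹ * δ ^ p := by positivity
  calc conj (omg p δ) t ≤ t * (δ + (2 * t) ^ (p - 1)⁻¹) :=
        conj_le_mul_of_le ht (by positivity) hbound
    _ = δ * t + 2 ^ (p - 1)⁻¹ * t ^ (p / (p - 1)) := by rw [mul_add, hpow]; ring
    _ ≤ δ ^ p + t ^ (p / (p - 1)) + 2 ^ (p - 1)⁻¹ * t ^ (p / (p - 1)) := by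
        gcongr
        exact mul_le_rpow_add_rpow hδ ht hpq
    _ ≤ (1 + 2 ^ (p - 1)⁻¹) * (δ ^ p + t ^ (p / (p - 1))) := by linarith

end
end
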